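/- arXiv:1806.02994 — 7 statements merged into one kernel-verified Lean document; each statement's English description precedes it below -/
import Mathlib

section
/- Let Γ be a discrete abelian group, Λ ⊆ Γ a subgroup, q : Γ → Γ/Λ the quotient homomorphism, E ⊆ Γ a subset and n ≥ 1 an integer. If q is injective on E and q(E) is an n-PR subset of Γ/Λ, then E is an n-PR subset of Γ. -/
open scoped DirectSum

/-- A subset `E` of a discrete abelian group `Γ` is `N`-PR (`N`-pseudo-Rademacher) if every
function `φ : E → 𝕋` taking values in the `N`-th roots of unity is the restriction of a
character of `Γ`. -/
def IsNPR {Γ : Type*} [CommGroup Γ] (N : ℕ) (E : Set Γ) : Prop :=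
  ∀ φ : Γ → Circle, (∀ γ ∈ E, φ γ ^ N = 1) →
    ∃ χ : Γ →* Circle, ∀ γ ∈ E, χ γ = φ γ

/-- Quotient lemma: if the quotient map `q : Γ → Γ/Λ` is injective on `E` and `q(E)` is
`n`-PR, then `E` is `n`-PR. -/
theorem quotient_nPR {Γ : Type*} [CommGroup Γ] (Λ : Subgroup Γ) (E : Set Γ) (n : ℕ)
    (hn : 1 ≤ n) (hinj : Set.InjOn (QuotientGroup.mk' Λ) E)
    (hPR : IsNPR n ((QuotientGroup.mk' Λ) '' E)) :
    IsNPR n E := by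
  intro φ hφ
  classical
  set q := QuotientGroup.mk' Λ
  set ψ : (Γ ⧸ Λ) → Circle := fun y =>
    if h : y ∈ q '' E then φ h.choose else 1 with hψ
  have key : ∀ y (h : y ∈ q '' E), h.choose ∈ E ∧ q h.choose = y :=
    fun y h => h.choose_spec
  obtain ⟨χ', hχ'⟩ := hPR ψ (by
    intro y hy
    simp only [hψ, dif_pos hy]
    exact hφ _ (key y hy).1)
  refine ⟨χ'.comp q, fun γ hγ => ?_⟩
  have hmem : q γ ∈ q '' E := ⟨γ, hγ, rfl⟩
  have := hχ' (q γ) hmem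
  simp only [hψ, dif_pos hmem] at this
  have heq : hmem.choose = γ := hinj (key _ hmem).1 hγ (key _ hmem).2
  simpa [heq] using this
end

section
/- Let Γ be a discrete abelian group and E ⊆ Γ. The following are equivalent: (1) for every function φ : E → 𝕋 with φ(γ) ∈ range(γ) for all γ ∈ E, there exists a character χ of Γ with χ(γ) = φ(γ) for all γ ∈ E; (2) E is independent. -/
open scoped DirectSum

/-- A subset `E` of an abelian group is independent: whenever `γ₁, …, γ_k ∈ E` are distinct
and `γ₁^{m₁} ⋯ γ_k^{m_k} = 1` for integers `m_i`, then `γ_i^{m_i} = 1` for every `i`. -/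
def IsIndependent {Γ : Type*} [CommGroup Γ] (E : Set Γ) : Prop :=
  ∀ s : Finset Γ, ↑s ⊆ E → ∀ m : Γ → ℤ,
    (∏ γ ∈ s, γ ^ m γ) = 1 → ∀ γ ∈ s, γ ^ m γ = 1

/-- `range(γ)`: the set of values `χ(γ)` as `χ` ranges over the characters of `Γ`. -/
def charRange {Γ : Type*} [CommGroup Γ] (γ : Γ) : Set Circle :=
  Set.range fun χ : Γ →* Circle => χ γ

/-- The circle is a divisible group (written additively). -/
noncomputable instance : DivisibleBy (Additive Circle) ℤ where
  div a n := Circle.expHom (Complex.arg (Additive.toMul a : Circle) / (n : ℝ))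
  div_zero a := by
    simp only [Int.cast_zero, div_zero, map_zero]
  div_cancel := fun {n} a hn => by
    rw [← map_zsmul, zsmul_eq_mul, mul_div_cancel₀ _ (by exact_mod_cast hn : ((n : ℤ) : ℝ) ≠ 0)]
    show Additive.ofMul (Circle.exp (Complex.arg (Additive.toMul a : Circle))) = a
    rw [Circle.exp_arg]
    rfl

/-- Factoring through a hom into the circle. -/
lemma factor_circle {A B : Type*} [AddCommGroup A] [AddCommGroup B]
    (F : B →+ A) (f : B →+ Additive Circle) (h : ∀ b, F b = 0 → f b = 0) :
    ∃ g : A →+ Additive Circle, ∀ b, g (F b) = f b := by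
  obtain ⟨g, hg⟩ := (Module.Baer.of_divisible (Additive Circle)).extension_property_addMonoidHom
    (QuotientAddGroup.kerLift F) (QuotientAddGroup.kerLift_injective F)
    (QuotientAddGroup.lift F.ker f (fun b hb => h b hb))
  refine ⟨g, fun b => ?_⟩
  have := DFunLike.congr_fun hg (QuotientAddGroup.mk b)
  have h2 : g (F b) = QuotientAddGroup.lift F.ker f (fun b hb => h b hb) (b : B ⧸ F.ker) := by
    simpa using this
  exact h2

/-- Membership criterion for `charRange`. -/
lemma mem_charRange_of {Γ : Type*} [CommGroup Γ] (γ : Γ) (z : Circle)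
    (h : ∀ n : ℤ, γ ^ n = 1 → z ^ n = 1) : z ∈ charRange γ := by
  have hcond : ∀ n : ℤ, (zmultiplesHom (Additive Γ) (Additive.ofMul γ)) n = 0 →
      (zmultiplesHom (Additive Circle) (Additive.ofMul z)) n = 0 := by
    intro n hn
    simp only [zmultiplesHom_apply, ← ofMul_zpow] at hn ⊢
    have : γ ^ n = 1 := by
      have := congrArg Additive.toMul hn; simpa using this
    rw [h n this]
    rfl
  obtain ⟨g, hg⟩ := factor_circle (zmultiplesHom (Additive Γ) (Additive.ofMul γ))
      (zmultiplesHom (Additive Circle) (Additive.ofMul z)) hcond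
  refine ⟨MonoidHom.toAdditive.symm g, ?_⟩
  have := hg 1
  simp only [zmultiplesHom_apply, one_zsmul] at this
  exact congrArg Additive.toMul this

lemma circle_exp_zpow (x : ℝ) (n : ℤ) : Circle.exp x ^ n = Circle.exp (n * x) := by
  have := map_zsmul Circle.expHom n x
  rw [zsmul_eq_mul] at this
  have := congrArg Additive.toMul this
  simpa [Circle.expHom, ← ofMul_zpow] using this.symm

/-- `E` admits exact interpolation of all `𝕋`-valued functions `φ` with
`φ(γ) ∈ range(γ)` iff `E` is independent. -/
theorem interpolation_iff_independent {Γ : Type*} [CommGroup Γ] (E : Set Γ) :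
    (∀ φ : Γ → Circle, (∀ γ ∈ E, φ γ ∈ charRange γ) →
      ∃ χ : Γ →* Circle, ∀ γ ∈ E, χ γ = φ γ) ↔ IsIndependent E := by
  classical
  constructor
  · -- interpolation → independent
    intro hint s hs m hprod γ₀ hγ₀
    by_contra hne
    set k : ℤ := m γ₀ with hk
    have hdvd : ¬ ((orderOf γ₀ : ℤ) ∣ k) := fun hd => hne (orderOf_dvd_iff_zpow_eq_one.mp hd)
    -- construct z ∈ charRange γ₀ with z ^ k ≠ 1
    obtain ⟨z, hz1, hz2⟩ : ∃ z : Circle, (∀ n : ℤ, γ₀ ^ n = 1 → z ^ n = 1) ∧ z ^ k ≠ 1 := by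
      rcases Nat.eq_zero_or_pos (orderOf γ₀) with h0 | hpos
      · -- infinite order
        have hk0 : k ≠ 0 := by
          intro h; exact hdvd (h ▸ dvd_zero _)
        refine ⟨Circle.exp (Real.pi / k), fun n hn => ?_, ?_⟩
        · have : (orderOf γ₀ : ℤ) ∣ n := orderOf_dvd_iff_zpow_eq_one.mpr hn
          rw [h0] at this
          simp only [Int.natCast_zero, zero_dvd_iff] at this
          rw [this, zpow_zero]
        · rw [circle_exp_zpow, mul_div_cancel₀ _ (by exact_mod_cast hk0 : ((k : ℤ) : ℝ) ≠ 0)]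
          intro h
          rw [Circle.exp_eq_one] at h
          obtain ⟨j, hj⟩ := h
          have h2 : (1 : ℝ) * Real.pi = (↑j * 2) * Real.pi := by linear_combination hj
          have h1 : (1 : ℝ) = ↑j * 2 := mul_right_cancel₀ Real.pi_ne_zero h2
          have : (1 : ℤ) = j * 2 := by exact_mod_cast h1
          omega
      · -- finite order n₀ > 0
        set n₀ : ℕ := orderOf γ₀ with hn₀
        have hn₀R : (n₀ : ℝ) ≠ 0 := by positivity
        refine ⟨Circle.exp (2 * Real.pi / n₀), fun n hn => ?_, ?_⟩
        · obtain ⟨t, rfl⟩ := orderOf_dvd_iff_zpow_eq_one.mpr hn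
          rw [circle_exp_zpow]
          have : ((n₀ : ℤ) * t : ℤ) * (2 * Real.pi / n₀) = t * (2 * Real.pi) := by
            push_cast
            field_simp
          rw [this, Circle.exp_int_mul_two_pi]
        · rw [circle_exp_zpow]
          intro h
          rw [Circle.exp_eq_one] at h
          obtain ⟨j, hj⟩ := h
          apply hdvd
          refine ⟨j, ?_⟩
          have h2π : (2 * Real.pi) ≠ 0 := by positivity
          field_simp at hj
          have h2 : (↑k : ℝ) * (2 * Real.pi) = (↑j * ↑n₀) * (2 * Real.pi) := by linear_combination (2 * Real.pi) * hj
          have h1 : (k : ℝ) = ↑j * ↑n₀ := mul_right_cancel₀ h2π h2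
          have : (k : ℝ) = ↑n₀ * ↑j := by rw [h1]; ring
          exact_mod_cast this
    have hzmem : z ∈ charRange γ₀ := mem_charRange_of γ₀ z hz1
    set φ : Γ → Circle := fun γ => if γ = γ₀ then z else 1 with hφdef
    have hφmem : ∀ γ ∈ E, φ γ ∈ charRange γ := by
      intro γ hγ
      by_cases hcase : γ = γ₀
      · subst hcase; simpa [hφdef] using hzmem
      · simp only [hφdef, if_neg hcase]
        exact ⟨1, rfl⟩
    obtain ⟨χ, hχ⟩ := hint φ hφmem
    have h1 : χ (∏ γ ∈ s, γ ^ m γ) = 1 := by rw [hprod, map_one]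
    rw [map_prod] at h1
    have h2 : ∀ γ ∈ s, χ (γ ^ m γ) = (if γ = γ₀ then z ^ m γ else 1) := by
      intro γ hγ
      rw [map_zpow, hχ γ (hs hγ)]
      by_cases hcase : γ = γ₀ <;> simp [hφdef, hcase]
    rw [Finset.prod_congr rfl h2, Finset.prod_ite_eq' s γ₀ (fun γ => z ^ m γ)] at h1
    rw [if_pos hγ₀] at h1
    exact hz2 h1
  · -- independent → interpolation
    intro hind φ hφ
    set F : (E →₀ ℤ) →+ Additive Γ :=
      Finsupp.liftAddHom (fun x => zmultiplesHom (Additive Γ) (Additive.ofMul (x : Γ))) with hF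
    set f : (E →₀ ℤ) →+ Additive Circle :=
      Finsupp.liftAddHom (fun x => zmultiplesHom (Additive Circle) (Additive.ofMul (φ x))) with hf
    have hFapp : ∀ b : E →₀ ℤ, Additive.toMul (F b) = ∏ x ∈ b.support, (x : Γ) ^ b x := by
      intro b
      rw [hF, Finsupp.liftAddHom_apply, Finsupp.sum, toMul_sum]
      refine Finset.prod_congr rfl fun x _ => ?_
      rw [zmultiplesHom_apply, ← ofMul_zpow]
      rfl
    have hfapp : ∀ b : E →₀ ℤ, Additive.toMul (f b) = ∏ x ∈ b.support, (φ x) ^ b x := by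
      intro b
      rw [hf, Finsupp.liftAddHom_apply, Finsupp.sum, toMul_sum]
      refine Finset.prod_congr rfl fun x _ => ?_
      rw [zmultiplesHom_apply, ← ofMul_zpow]
      rfl
    have hcond : ∀ b, F b = 0 → f b = 0 := by
      intro b hb
      -- F b = 0 means the product relation holds; use independence
      have hrel : (∏ x ∈ b.support, (x : Γ) ^ b x) = 1 := by
        have := congrArg Additive.toMul hb
        rwa [hFapp b] at this
      set s : Finset Γ := b.support.image (Subtype.val) with hsdef
      set mm : Γ → ℤ := fun γ => if h : γ ∈ E then b ⟨γ, h⟩ else 0 with hmm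
      have hinj : Set.InjOn (Subtype.val) (b.support : Set E) :=
        Set.injOn_of_injective Subtype.val_injective
      have hprod_s : (∏ γ ∈ s, γ ^ mm γ) = 1 := by
        rw [hsdef, Finset.prod_image (fun x hx y hy => Subtype.val_injective.eq_iff.mp)]
        rw [← hrel]
        refine Finset.prod_congr rfl fun x _ => ?_
        congr 1
        rw [hmm]
        simp only [x.2, dif_pos]
      have hsub : (↑s : Set Γ) ⊆ E := by
        rw [hsdef]
        intro γ hγ
        simp only [Finset.coe_image, Set.mem_image] at hγ
        obtain ⟨x, _, rfl⟩ := hγ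
        exact x.2
      have hkill := hind s hsub mm hprod_s
      -- each individual relation holds, so each value dies
      have hterm : ∀ x ∈ b.support, (b x) • Additive.ofMul (φ x) = 0 := by
        intro x hx
        have hmem : (x : Γ) ∈ s := by
          rw [hsdef]; exact Finset.mem_image_of_mem _ hx
        have h1 : (x : Γ) ^ mm (x : Γ) = 1 := hkill _ hmem
        have hmmx : mm (x : Γ) = b x := by rw [hmm]; simp only [x.2, dif_pos]
        rw [hmmx] at h1
        obtain ⟨χ, hχ⟩ := hφ (x : Γ) x.2
        have : (φ x) ^ (b x) = 1 := by
          rw [← hχ, ← map_zpow, h1, map_one]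
        rw [← ofMul_zpow, this]
        rfl
      rw [hf, Finsupp.liftAddHom_apply, Finsupp.sum]
      refine Finset.sum_eq_zero fun x hx => ?_
      rw [zmultiplesHom_apply]
      exact hterm x hx
    obtain ⟨g, hg⟩ := factor_circle F f hcond
    refine ⟨MonoidHom.toAdditive.symm g, fun γ hγ => ?_⟩
    have := hg (Finsupp.single ⟨γ, hγ⟩ 1)
    rw [hF, hf, Finsupp.liftAddHom_apply_single, Finsupp.liftAddHom_apply_single] at this
    simp only [zmultiplesHom_apply, one_zsmul] at this
    exact congrArg Additive.toMul this
end

section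
/- Let Γ be a discrete abelian group, N ≥ 1 an integer and E ⊆ Γ. If E is independent and for every γ ∈ E the set of N-th roots of unity in 𝕋 is contained in range(γ), then E is N-PR. -/
open scoped DirectSum

noncomputable instance inst_s3 : DivisibleBy (Additive Circle) ℤ where
  div a n := Circle.expHom (Complex.arg (Additive.toMul a : Circle) / n)
  div_zero a := by simp
  div_cancel {n} a hn := by
    rw [← map_zsmul, zsmul_eq_mul, mul_div_cancel₀]
    · exact congrArg Additive.ofMul (Circle.exp_arg _)
    · exact_mod_cast hn


/-- If `E` is independent and every `N`-th root of unity lies in `range(γ)` for every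
`γ ∈ E`, then `E` is `N`-PR. -/
theorem independent_nPR {Γ : Type*} [CommGroup Γ] (N : ℕ) (hN : 1 ≤ N) (E : Set Γ)
    (hind : IsIndependent E)
    (hroots : ∀ γ ∈ E, {z : Circle | z ^ N = 1} ⊆ charRange γ) :
    IsNPR N E := by
  classical
  intro φ hφ
  have hchar : ∀ γ : E, ∃ χ : Γ →* Circle, χ γ = φ γ := fun γ =>
    hroots γ γ.2 (hφ γ γ.2)
  choose ψ hψ using hchar
  set f : (E →₀ ℤ) →+ Additive Γ :=
    Finsupp.liftAddHom (fun γ : E => zmultiplesHom (Additive Γ) (Additive.ofMul (γ : Γ))) with hf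
  set g : (E →₀ ℤ) →+ Additive Circle :=
    Finsupp.liftAddHom (fun γ : E => zmultiplesHom (Additive Circle) (Additive.ofMul (φ γ))) with hg
  have keyf : ∀ l : E →₀ ℤ, f l = Additive.ofMul (∏ γ ∈ l.support, (γ : Γ) ^ l γ) := by
    intro l
    rw [hf, Finsupp.liftAddHom_apply, Finsupp.sum, ofMul_prod]
    exact Finset.sum_congr rfl fun γ _ => by
      rw [zmultiplesHom_apply, ofMul_zpow]
  have keyg : ∀ l : E →₀ ℤ, g l = Additive.ofMul (∏ γ ∈ l.support, (φ γ : Circle) ^ l γ) := by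
    intro l
    rw [hg, Finsupp.liftAddHom_apply, Finsupp.sum, ofMul_prod]
    exact Finset.sum_congr rfl fun γ _ => by
      rw [zmultiplesHom_apply, ofMul_zpow]
  have hker : ∀ l ∈ f.ker, g l = 0 := by
    intro l hl
    rw [AddMonoidHom.mem_ker, keyf] at hl
    have hl' : (∏ γ ∈ l.support, (γ : Γ) ^ l γ) = 1 := by
      have := congrArg Additive.toMul hl; simpa using this
    set m : Γ → ℤ := fun x => if h : x ∈ E then l ⟨x, h⟩ else 0 with hm
    have hmval : ∀ γ : E, m (γ : Γ) = l γ := by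
      intro γ; simp [hm, γ.2]
    have hsub : ↑(l.support.image ((↑) : E → Γ)) ⊆ E := by
      intro x hx
      simp only [Finset.coe_image, Set.mem_image] at hx
      obtain ⟨γ, _, rfl⟩ := hx
      exact γ.2
    have hprod : (∏ x ∈ l.support.image ((↑) : E → Γ), x ^ m x) = 1 := by
      rw [Finset.prod_image (fun a _ b _ h => Subtype.coe_injective h)]
      rw [← hl']
      exact Finset.prod_congr rfl fun γ _ => by rw [hmval]
    have htriv := hind _ hsub m hprod
    -- each γ^(l γ) = 1 for γ in support, hence φ γ ^ (l γ) = 1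
    have hφone : ∀ γ ∈ l.support, (φ γ : Circle) ^ l γ = 1 := by
      intro γ hγ
      have h1 : (γ : Γ) ^ l γ = 1 := by
        have := htriv (γ : Γ) (Finset.mem_image_of_mem _ hγ)
        rwa [hmval] at this
      calc (φ γ) ^ l γ = (ψ γ γ) ^ l γ := by rw [hψ]
        _ = ψ γ ((γ : Γ) ^ l γ) := by rw [map_zpow]
        _ = 1 := by rw [h1, map_one]
    rw [keyg]
    have : (∏ γ ∈ l.support, (φ γ : Circle) ^ l γ) = 1 :=
      Finset.prod_eq_one hφone
    rw [this]; rfl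
  -- lift g through the quotient and extend along the injective kerLift f
  have baer : Module.Baer ℤ (Additive Circle) := Module.Baer.of_divisible _
  obtain ⟨h, hh⟩ := baer.extension_property_addMonoidHom
    (QuotientAddGroup.kerLift f) (QuotientAddGroup.kerLift_injective f)
    (QuotientAddGroup.lift f.ker g hker)
  refine ⟨{ toFun := fun γ => Additive.toMul (h (Additive.ofMul γ)),
            map_one' := by simpa using congrArg Additive.toMul (h.map_zero),
            map_mul' := fun a b => by
              simpa using congrArg Additive.toMul (h.map_add (Additive.ofMul a) (Additive.ofMul b)) },
          ?_⟩
  intro γ hγ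
  have h1 : f (Finsupp.single (⟨γ, hγ⟩ : E) 1) = Additive.ofMul γ := by
    rw [hf, Finsupp.liftAddHom_apply_single, zmultiplesHom_apply, one_smul]
  have h2 : g (Finsupp.single (⟨γ, hγ⟩ : E) 1) = Additive.ofMul (φ γ) := by
    rw [hg, Finsupp.liftAddHom_apply_single, zmultiplesHom_apply, one_smul]
  have h3 : h (Additive.ofMul γ) = Additive.ofMul (φ γ) := by
    rw [← h1, ← QuotientAddGroup.kerLift_mk f]
    have := congrArg (fun k => k ((QuotientAddGroup.mk (Finsupp.single (⟨γ, hγ⟩ : E) 1)) : (E →₀ ℤ) ⧸ f.ker)) hh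
    simp only [AddMonoidHom.comp_apply] at this
    rw [this]; exact h2
  simpa using congrArg Additive.toMul h3
end

section
/- Let Γ be a discrete abelian group and let a, b ≥ 1 be coprime integers. A subset E ⊆ Γ is (ab)-PR if and only if E is both a-PR and b-PR. -/
open scoped DirectSum

/-- For coprime `a, b`, a set is `(ab)`-PR iff it is both `a`-PR and `b`-PR. -/
theorem mul_nPR_iff {Γ : Type*} [CommGroup Γ] (a b : ℕ) (ha : 1 ≤ a) (hb : 1 ≤ b)
    (hab : Nat.Coprime a b) (E : Set Γ) :
    IsNPR (a * b) E ↔ IsNPR a E ∧ IsNPR b E := by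
  constructor
  · intro h
    refine ⟨?_, ?_⟩ <;> intro φ hφ
    · exact h φ (fun γ hγ => by rw [pow_mul, hφ γ hγ, one_pow])
    · exact h φ (fun γ hγ => by rw [mul_comm, pow_mul, hφ γ hγ, one_pow])
  · rintro ⟨hA, hB⟩ φ hφ
    obtain ⟨u, v, huv⟩ := Nat.isCoprime_iff_coprime.mpr hab
    obtain ⟨χ1, hχ1⟩ := hA (fun γ => φ γ ^ (v * b)) (fun γ hγ => by
      rw [← zpow_natCast (φ γ ^ (v * (b : ℤ))) a, ← zpow_mul]
      have h1 : v * (b : ℤ) * (a : ℤ) = ((a * b : ℕ) : ℤ) * v := by push_cast; ring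
      rw [h1, zpow_mul, zpow_natCast, hφ γ hγ, one_zpow])
    obtain ⟨χ2, hχ2⟩ := hB (fun γ => φ γ ^ (u * a)) (fun γ hγ => by
      rw [← zpow_natCast (φ γ ^ (u * (a : ℤ))) b, ← zpow_mul]
      have h1 : u * (a : ℤ) * (b : ℤ) = ((a * b : ℕ) : ℤ) * u := by push_cast; ring
      rw [h1, zpow_mul, zpow_natCast, hφ γ hγ, one_zpow])
    refine ⟨χ1 * χ2, fun γ hγ => ?_⟩
    have := hχ1 γ hγ
    have := hχ2 γ hγ
    simp only [MonoidHom.mul_apply, hχ1 γ hγ, hχ2 γ hγ]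
    rw [← zpow_add]
    have h2 : v * (b : ℤ) + u * (a : ℤ) = 1 := by linarith [huv]
    rw [h2, zpow_one]
end

section
/- Let Γ be a discrete abelian group and N ≥ 1 an integer. Every N-PR subset E ⊆ Γ is weak ε-Kronecker with ε = |1 − e^{πi/N}|. -/
open scoped DirectSum

/-- `E` is weak `ε`-Kronecker if every `𝕋`-valued function on `E` can be uniformly
`ε`-approximated by a character. -/
def IsWeakKronecker {Γ : Type*} [CommGroup Γ] (ε : ℝ) (E : Set Γ) : Prop :=
  ∀ φ : Γ → Circle, ∃ χ : Γ →* Circle,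
    ∀ γ ∈ E, ‖(φ γ : ℂ) - (χ γ : ℂ)‖ ≤ ε

lemma circle_exp_pow (x : ℝ) (n : ℕ) : Circle.exp x ^ n = Circle.exp (n * x) := by
  induction n with
  | zero => simp
  | succ k ih => rw [pow_succ, ih, ← Circle.exp_add]; congr 1; push_cast; ring

lemma normSq_one_sub_exp (x : ℝ) :
    Complex.normSq (1 - Complex.exp (x * Complex.I)) = 2 - 2 * Real.cos x := by
  rw [Complex.normSq_apply]
  simp [Complex.sub_re, Complex.sub_im, Complex.exp_ofReal_mul_I_re,
    Complex.exp_ofReal_mul_I_im]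
  have := Real.sin_sq_add_cos_sq x
  ring_nf
  nlinarith [Real.sin_sq_add_cos_sq x]

lemma abs_one_sub_exp_mono {x y : ℝ} (hx : |x| ≤ y) (hy : y ≤ Real.pi) :
    ‖1 - Complex.exp (x * Complex.I)‖ ≤
      ‖1 - Complex.exp (y * Complex.I)‖ := by
  rw [Complex.norm_def, Complex.norm_def, normSq_one_sub_exp, normSq_one_sub_exp]
  apply Real.sqrt_le_sqrt
  have hc : Real.cos y ≤ Real.cos x := by
    rw [← Real.cos_abs x]
    exact Real.cos_le_cos_of_nonneg_of_le_pi (abs_nonneg x) hy hx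
  linarith

/-- Every `N`-PR set is weak `ε`-Kronecker for `ε = |1 - e^{πi/N}|`. -/
theorem nPR_weakKronecker {Γ : Type*} [CommGroup Γ] (N : ℕ) (hN : 1 ≤ N) (E : Set Γ)
    (hE : IsNPR N E) :
    IsWeakKronecker ‖(1 - Complex.exp (Real.pi * Complex.I / N) : ℂ)‖ E := by
  intro φ
  have hN0 : (N : ℝ) ≠ 0 := Nat.cast_ne_zero.mpr (by omega)
  have hNpos : (0:ℝ) < N := by positivity
  set ψ : Γ → Circle := fun γ =>
    Circle.exp (2 * Real.pi * (round ((N : ℝ) * Complex.arg (φ γ) / (2 * Real.pi))) / N) with hψdef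
  have hψ : ∀ γ ∈ E, ψ γ ^ N = 1 := by
    intro γ _
    rw [hψdef, circle_exp_pow]
    rw [show (N:ℝ) * (2 * Real.pi * (round ((N : ℝ) * Complex.arg (φ γ) / (2 * Real.pi))) / N)
        = (round ((N : ℝ) * Complex.arg (φ γ) / (2 * Real.pi)) : ℝ) * (2 * Real.pi) by
      field_simp]
    exact Circle.exp_int_mul_two_pi _
  obtain ⟨χ, hχ⟩ := hE ψ hψ
  refine ⟨χ, fun γ hγ => ?_⟩
  rw [hχ γ hγ]
  set t : ℝ := Complex.arg (φ γ)
  set k : ℤ := round ((N : ℝ) * t / (2 * Real.pi))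
  set a : ℝ := 2 * Real.pi * k / N with ha
  have hφγ : (φ γ : ℂ) = Complex.exp ((t:ℂ) * Complex.I) := by
    conv_lhs => rw [← Circle.exp_arg (φ γ)]
    exact Circle.coe_exp _
  have hψγ : ((ψ γ : Circle) : ℂ) = Complex.exp ((a:ℂ) * Complex.I) := by
    rw [hψdef]; exact Circle.coe_exp _
  rw [hφγ, hψγ]
  have key : Complex.exp ((t:ℂ) * Complex.I) - Complex.exp ((a:ℂ) * Complex.I)
      = Complex.exp ((a:ℂ) * Complex.I) *
        (Complex.exp (((t - a : ℝ) : ℂ) * Complex.I) - 1) := by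
    rw [mul_sub, ← Complex.exp_add, mul_one]
    push_cast
    ring_nf
  rw [key, norm_mul, Complex.norm_exp_ofReal_mul_I, one_mul, norm_sub_rev]
  have hπ : Real.pi * Complex.I / N = ((Real.pi / N : ℝ) : ℂ) * Complex.I := by
    push_cast; ring
  rw [hπ]
  apply abs_one_sub_exp_mono
  · have h2π : (0:ℝ) < 2 * Real.pi := by positivity
    have hround := abs_sub_round ((N : ℝ) * t / (2 * Real.pi))
    rw [abs_le] at hround
    have hA : (N:ℝ) * t ≤ ((k:ℝ) + 1/2) * (2 * Real.pi) := by
      have h : (N:ℝ) * t / (2 * Real.pi) ≤ (k:ℝ) + 1/2 := by linarith [hround.2]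
      exact (div_le_iff₀ h2π).mp h
    have hB : ((k:ℝ) - 1/2) * (2 * Real.pi) ≤ (N:ℝ) * t := by
      have h : (k:ℝ) - 1/2 ≤ (N:ℝ) * t / (2 * Real.pi) := by linarith [hround.1]
      exact (le_div_iff₀ h2π).mp h
    have heq : t - a = ((N:ℝ) * t - 2 * Real.pi * k) / N := by
      rw [ha]; field_simp
    rw [heq, abs_div, abs_of_pos hNpos, div_le_div_iff₀ hNpos hNpos]
    have habs : |(N:ℝ) * t - 2 * Real.pi * k| ≤ Real.pi := by
      rw [abs_le]; constructor <;> nlinarith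
    nlinarith [habs]
  · rw [div_le_iff₀ hNpos]
    nlinarith [Real.pi_pos, (by exact_mod_cast hN : (1:ℝ) ≤ N)]
end

section
/- Let Γ = ⊕_{p prime} G_p, where for each prime p the group G_p is a direct sum of copies of the Prüfer p-group C(p^∞), and let Proj_p : Γ → G_p denote the coordinate projection. Let N = p_1^{n_1}⋯p_k^{n_k} with p_1, …, p_k distinct primes and n_i ≥ 1, and let E ⊆ Γ be an N-PR set. Then for each 1 ≤ i ≤ k the projection Proj_{p_i} is injective on E, the set E_i := Proj_{p_i}(E) is p_i^{n_i}-PR in G_{p_i}, and for 2 ≤ i ≤ k the map f_i := Proj_{p_i} ∘ (Proj_{p_1}|_E)^{-1} : E_1 → E_i is a bijection; consequently every γ ∈ E can be written as γ = δ ⊕ f_2(δ) ⊕ ⋯ ⊕ f_k(δ) ⊕ β_γ, where δ = Proj_{p_1}(γ) ∈ E_1 and β_γ lies in ⊕_{p ∉ {p_1,…,p_k}} G_p. -/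
open scoped DirectSum

/-- A subset `E` of a discrete (additively written) abelian group `Γ` is `N`-PR
(`N`-pseudo-Rademacher) if every function `φ : E → 𝕋` taking values in the `N`-th roots of
unity is the restriction of a character of `Γ`. -/
def IsNPRAdd {Γ : Type*} [AddCommGroup Γ] (N : ℕ) (E : Set Γ) : Prop :=
  ∀ φ : Γ → Circle, (∀ γ ∈ E, φ γ ^ N = 1) →
    ∃ χ : AddChar Γ Circle, ∀ γ ∈ E, χ γ = φ γ

/-- The group `ℚ/ℤ`. -/
abbrev RatModInt : Type := ℚ ⧸ AddSubgroup.zmultiples (1 : ℚ)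

/-- The Prüfer `p`-group `C(p^∞)`, realized as the `p`-primary component of `ℚ/ℤ`. -/
def Prufer (p : ℕ) : AddSubgroup RatModInt where
  carrier := {x | ∃ k : ℕ, (p ^ k : ℕ) • x = 0}
  zero_mem' := ⟨0, smul_zero _⟩
  add_mem' := by
    rintro a b ⟨k, hk⟩ ⟨l, hl⟩
    have h1 : (p ^ (k + l) : ℕ) • a = 0 := by
      rw [pow_add, mul_comm, mul_smul, hk, smul_zero]
    have h2 : (p ^ (k + l) : ℕ) • b = 0 := by
      rw [pow_add, mul_smul, hl, smul_zero]
    exact ⟨k + l, by rw [smul_add, h1, h2, add_zero]⟩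
  neg_mem' := by
    rintro a ⟨k, hk⟩
    exact ⟨k, by rw [smul_neg, hk, neg_zero]⟩

lemma prufer_pow_smul {q : ℕ} (a : ↥(Prufer q)) : ∃ k : ℕ, (q ^ k : ℕ) • a = 0 := by
  obtain ⟨k, hk⟩ := a.2
  exact ⟨k, Subtype.ext (by simpa using hk)⟩

lemma directSum_prufer_torsion {ι : Type*} {q : ℕ}
    (x : ⨁ _ : ι, ↥(Prufer q)) : ∃ m : ℕ, (q ^ m : ℕ) • x = 0 := by
  classical
  induction x using DirectSum.induction_on with
  | zero => exact ⟨0, smul_zero _⟩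
  | of j a =>
      obtain ⟨k, hk⟩ := prufer_pow_smul a
      exact ⟨k, by rw [← map_nsmul, hk, map_zero]⟩
  | add x y hx hy =>
      obtain ⟨m, hm⟩ := hx
      obtain ⟨m', hm'⟩ := hy
      have h1 : (q ^ (m + m') : ℕ) • x = 0 := by
        rw [pow_add, mul_comm, mul_smul, hm, smul_zero]
      have h2 : (q ^ (m + m') : ℕ) • y = 0 := by
        rw [pow_add, mul_smul, hm', smul_zero]
      exact ⟨m + m', by rw [smul_add, h1, h2, add_zero]⟩

lemma coprime_smul_eq {I : Nat.Primes → Type*} (r : Nat.Primes)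
    (γ : ⨁ q : Nat.Primes, ⨁ _ : I q, ↥(Prufer (q : ℕ))) :
    ∃ M : ℕ, Nat.Coprime M r ∧
      M • γ = M • DirectSum.of (fun q : Nat.Primes => ⨁ _ : I q, ↥(Prufer (q : ℕ))) r (γ r) := by
  classical
  induction γ using DirectSum.induction_on with
  | zero => exact ⟨1, Nat.coprime_one_left _, by simp⟩
  | of q x =>
      by_cases hq : q = r
      · subst hq
        exact ⟨1, Nat.coprime_one_left _, by rw [DirectSum.of_eq_same]⟩
      · obtain ⟨m, hm⟩ := directSum_prufer_torsion x
        refine ⟨(q : ℕ) ^ m, ?_, ?_⟩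
        · exact Nat.Coprime.pow_left _
            ((Nat.coprime_primes q.2 r.2).mpr (fun h => hq (Subtype.ext h)))
        · rw [DirectSum.of_eq_of_ne _ _ _ (Ne.symm hq), map_zero, smul_zero, ← map_nsmul, hm, map_zero]
  | add x y hx hy =>
      obtain ⟨M, hM, hMx⟩ := hx
      obtain ⟨M', hM', hMy⟩ := hy
      refine ⟨M * M', hM.mul hM', ?_⟩
      have hadd : (x + y) r = x r + y r := by simp
      have e1 : (M * M') • x = (M * M') • DirectSum.of (fun q : Nat.Primes => ⨁ _ : I q, ↥(Prufer (q : ℕ))) r (x r) := by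
        rw [mul_comm, mul_smul, hMx, ← mul_smul, mul_comm]
      have e2 : (M * M') • y = (M * M') • DirectSum.of (fun q : Nat.Primes => ⨁ _ : I q, ↥(Prufer (q : ℕ))) r (y r) := by
        rw [mul_smul, hMy, ← mul_smul]
      rw [hadd, map_add, smul_add, smul_add, e1, e2]

lemma char_eval_of {I : Nat.Primes → Type*} (r : Nat.Primes)
    (χ : AddChar (⨁ q : Nat.Primes, ⨁ _ : I q, ↥(Prufer (q : ℕ))) Circle)
    (γ : ⨁ q : Nat.Primes, ⨁ _ : I q, ↥(Prufer (q : ℕ)))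
    (s : ℕ) (hγ : χ γ ^ ((r : ℕ) ^ s) = 1) :
    χ (DirectSum.of (fun q : Nat.Primes => ⨁ _ : I q, ↥(Prufer (q : ℕ))) r (γ r)) = χ γ := by
  classical
  obtain ⟨M, hM, hMγ⟩ := coprime_smul_eq r γ
  obtain ⟨m, hm⟩ := directSum_prufer_torsion (γ r)
  set c : Circle := χ (DirectSum.of (fun q : Nat.Primes => ⨁ _ : I q, ↥(Prufer (q : ℕ))) r (γ r))
    with hc
  have hcpow : c ^ ((r : ℕ) ^ m) = 1 := by
    rw [hc, ← AddChar.map_nsmul_eq_pow, ← map_nsmul, hm, map_zero, AddChar.map_zero_eq_one]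
  set d : Circle := χ γ * c⁻¹ with hd
  have h1 : d ^ M = 1 := by
    rw [hd, mul_pow, inv_pow, hc, ← AddChar.map_nsmul_eq_pow, ← AddChar.map_nsmul_eq_pow,
      ← hMγ, mul_inv_cancel]
  have h2 : d ^ ((r : ℕ) ^ (s + m)) = 1 := by
    rw [hd, mul_pow, inv_pow, pow_add, pow_mul, hγ, one_pow, one_mul,
      mul_comm ((r : ℕ) ^ s), pow_mul, hcpow, one_pow, inv_one]
  have hord : orderOf d ∣ Nat.gcd M ((r : ℕ) ^ (s + m)) :=
    Nat.dvd_gcd (orderOf_dvd_of_pow_eq_one h1) (orderOf_dvd_of_pow_eq_one h2)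
  rw [Nat.Coprime.gcd_eq_one (hM.pow_right _)] at hord
  have hd1 : d = 1 := orderOf_eq_one_iff.mp (Nat.dvd_one.mp hord)
  exact (mul_inv_eq_one.mp hd1).symm

lemma exists_circle_root (p : ℕ) (hp : p.Prime) :
    ∃ ζ : Circle, ζ ^ p = 1 ∧ ζ ≠ 1 := by
  have hp0 : (p : ℝ) ≠ 0 := by exact_mod_cast hp.ne_zero
  refine ⟨Circle.exp (2 * Real.pi / p), ?_, ?_⟩
  · have hpow : ∀ m : ℕ, Circle.exp (2 * Real.pi / p) ^ m = Circle.exp (m * (2 * Real.pi / p)) := by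
      intro m
      induction m with
      | zero => simp [Circle.exp_zero]
      | succ m ih => rw [pow_succ, ih, ← Circle.exp_add]; congr 1; push_cast; ring
    rw [hpow p, mul_div_cancel₀ _ hp0, Circle.exp_two_pi]
  · intro h
    rw [Circle.exp_eq_one] at h
    obtain ⟨m, hm⟩ := h
    have hπ : (2 * Real.pi) ≠ 0 := by positivity
    rw [div_eq_iff hp0] at hm
    have h1 : (2 * Real.pi) * 1 = (2 * Real.pi) * ((m : ℝ) * p) := by linear_combination hm
    have h2 : (m : ℝ) * p = 1 := (mul_left_cancel₀ hπ h1).symm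
    have h3 : (m * p : ℤ) = 1 := by exact_mod_cast h2
    have h4 : (p : ℤ) ∣ 1 := Dvd.intro_left m h3
    have h5 : p ∣ 1 := by exact_mod_cast h4
    exact hp.one_lt.ne' (Nat.dvd_one.mp h5)

/-- Structure of `N`-PR sets in `Γ = ⊕_{p prime} G_p`, `G_p = ⊕_{j ∈ I p} C(p^∞)`,
for `N = p₁^{n₁} ⋯ p_k^{n_k}` with distinct primes `p_i`: each projection `Proj_{p_i}` is
injective on `E`, the image `E_i = Proj_{p_i}(E)` is `p_i^{n_i}`-PR, the maps
`f_i = Proj_{p_i} ∘ (Proj_{p_1}|_E)⁻¹ : E₁ → E_i` are bijections, and every `γ ∈ E`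
decomposes as `γ = δ ⊕ f₂(δ) ⊕ ⋯ ⊕ f_k(δ) ⊕ β_γ` with `δ = Proj_{p_1}(γ)` and `β_γ`
supported away from `{p₁, …, p_k}`. -/
theorem structure_nPR_torsion {I : Nat.Primes → Type*} (k : ℕ) (hk : 0 < k)
    (p : Fin k → Nat.Primes) (hpinj : Function.Injective p)
    (n : Fin k → ℕ) (hn : ∀ i, 1 ≤ n i)
    (E : Set (⨁ q : Nat.Primes, ⨁ _ : I q, ↥(Prufer (q : ℕ))))
    (hE : IsNPRAdd (∏ i, (p i : ℕ) ^ n i) E) :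
    (∀ i : Fin k, Set.InjOn (fun γ => γ (p i)) E) ∧
    (∀ i : Fin k, IsNPRAdd ((p i : ℕ) ^ n i) ((fun γ => γ (p i)) '' E)) ∧
    (∀ i : Fin k,
      ∃ f : (⨁ _ : I (p ⟨0, hk⟩), ↥(Prufer (p ⟨0, hk⟩ : ℕ))) →
            (⨁ _ : I (p i), ↥(Prufer (p i : ℕ))),
        Set.BijOn f ((fun γ => γ (p ⟨0, hk⟩)) '' E) ((fun γ => γ (p i)) '' E) ∧
        (∀ γ ∈ E, f (γ (p ⟨0, hk⟩)) = γ (p i))) ∧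
    (∀ γ ∈ E, ∃ β : ⨁ q : Nat.Primes, ⨁ _ : I q, ↥(Prufer (q : ℕ)),
      (∀ i : Fin k, β (p i) = 0) ∧
      γ = (∑ i : Fin k,
            DirectSum.of (fun q : Nat.Primes => ⨁ _ : I q, ↥(Prufer (q : ℕ)))
              (p i) (γ (p i))) + β) := by

  classical
  have hdvd : ∀ i : Fin k, ((p i : ℕ)) ^ (n i) ∣ ∏ j, (p j : ℕ) ^ n j :=
    fun i => Finset.dvd_prod_of_mem _ (Finset.mem_univ i)
  have inj : ∀ i : Fin k, Set.InjOn (fun γ => γ (p i)) E := by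
    intro i γ hγ γ' hγ' hpp
    by_contra hne
    obtain ⟨ζ, hζp, hζ1⟩ := exists_circle_root (p i) (p i).2
    have hφ : ∀ x ∈ E, (if x = γ' then ζ else 1) ^ (∏ j, (p j : ℕ) ^ n j) = 1 := by
      intro x hx
      by_cases h : x = γ'
      · rw [if_pos h]
        obtain ⟨c, hc⟩ :=
          (dvd_pow_self (p i : ℕ) (Nat.one_le_iff_ne_zero.mp (hn i))).trans (hdvd i)
        rw [hc, pow_mul, hζp, one_pow]
      · rw [if_neg h, one_pow]
    obtain ⟨χ, hχ⟩ := hE (fun x => if x = γ' then ζ else 1) hφ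
    have e1 : χ (DirectSum.of (fun q : Nat.Primes => ⨁ _ : I q, ↥(Prufer (q : ℕ)))
        (p i) (γ (p i))) = χ γ := by
      refine char_eval_of (p i) χ γ 1 ?_
      rw [pow_one, hχ γ hγ, if_neg hne, one_pow]
    have e2 : χ (DirectSum.of (fun q : Nat.Primes => ⨁ _ : I q, ↥(Prufer (q : ℕ)))
        (p i) (γ' (p i))) = χ γ' := by
      refine char_eval_of (p i) χ γ' 1 ?_
      rw [pow_one, hχ γ' hγ', if_pos rfl]
      exact hζp
    rw [hχ γ hγ, if_neg hne] at e1
    rw [hχ γ' hγ', if_pos rfl] at e2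
    have hpp' : γ (p i) = γ' (p i) := hpp
    rw [hpp', e2] at e1
    exact hζ1 e1
  have npr : ∀ i : Fin k, IsNPRAdd ((p i : ℕ) ^ n i) ((fun γ => γ (p i)) '' E) := by
    intro i φi hφi
    have hφ : ∀ x ∈ E, φi (x (p i)) ^ (∏ j, (p j : ℕ) ^ n j) = 1 := by
      intro x hx
      obtain ⟨c, hc⟩ := hdvd i
      rw [hc, pow_mul, hφi _ ⟨x, hx, rfl⟩, one_pow]
    obtain ⟨χ, hχ⟩ := hE (fun x => φi (x (p i))) hφ
    refine ⟨χ.compAddMonoidHom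
      (DirectSum.of (fun q : Nat.Primes => ⨁ _ : I q, ↥(Prufer (q : ℕ))) (p i)), ?_⟩
    rintro x ⟨γ, hγ, rfl⟩
    have h1 : χ γ ^ ((p i : ℕ) ^ (n i)) = 1 := by
      rw [hχ γ hγ]
      exact hφi _ ⟨γ, hγ, rfl⟩
    have h2 := char_eval_of (p i) χ γ (n i) h1
    simp only [AddChar.compAddMonoidHom_apply]
    rw [h2, hχ γ hγ]
  refine ⟨inj, npr, ?_, ?_⟩
  · intro i
    have fspec : ∀ γ ∈ E,
        (fun x => if h : ∃ γ', γ' ∈ E ∧ γ' (p ⟨0, hk⟩) = x then h.choose (p i) else 0)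
          (γ (p ⟨0, hk⟩)) = γ (p i) := by
      intro γ hγ
      have hex : ∃ γ', γ' ∈ E ∧ γ' (p ⟨0, hk⟩) = γ (p ⟨0, hk⟩) := ⟨γ, hγ, rfl⟩
      simp only []
      rw [dif_pos hex]
      have heq : hex.choose = γ := inj ⟨0, hk⟩ hex.choose_spec.1 hγ hex.choose_spec.2
      rw [heq]
    refine ⟨fun x => if h : ∃ γ', γ' ∈ E ∧ γ' (p ⟨0, hk⟩) = x then h.choose (p i) else 0,
      ⟨?_, ?_, ?_⟩, fspec⟩
    · rintro x ⟨γ, hγ, rfl⟩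
      exact ⟨γ, hγ, (fspec γ hγ).symm⟩
    · rintro x ⟨γ, hγ, rfl⟩ y ⟨γ', hγ', rfl⟩ hfxy
      rw [fspec γ hγ, fspec γ' hγ'] at hfxy
      exact congrArg (fun δ => δ (p ⟨0, hk⟩)) (inj i hγ hγ' hfxy)
    · rintro y ⟨γ, hγ, rfl⟩
      exact ⟨γ (p ⟨0, hk⟩), ⟨γ, hγ, rfl⟩, fspec γ hγ⟩
  · intro γ hγ
    refine ⟨γ - ∑ i, DirectSum.of (fun q : Nat.Primes => ⨁ _ : I q, ↥(Prufer (q : ℕ)))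
      (p i) (γ (p i)), ?_, by abel⟩
    intro j
    have hsum : (∑ i, DirectSum.of (fun q : Nat.Primes => ⨁ _ : I q, ↥(Prufer (q : ℕ)))
        (p i) (γ (p i))) (p j) = γ (p j) := by
      rw [DFinsupp.finset_sum_apply]
      have hne : ∀ i : Fin k, i ≠ j →
          (DirectSum.of (fun q : Nat.Primes => ⨁ _ : I q, ↥(Prufer (q : ℕ)))
            (p i) (γ (p i))) (p j) = 0 := by
        intro i hij
        exact DirectSum.of_eq_of_ne _ _ _ (fun h => hij (hpinj h.symm))
      rw [Fintype.sum_eq_single j hne]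
      exact DirectSum.of_eq_same _ _
    rw [DFinsupp.sub_apply, hsum, sub_self]
end

section
/- Let Γ = ⊕_{β ∈ B} ℚ be a direct sum of copies of the additive group of rational numbers. If E ⊆ Γ is uncountable, then E contains an independent subset F with |F| = |E|. -/
open scoped DirectSum

/-- A subset `E` of an additively written abelian group is independent: whenever
`γ₁, …, γ_k ∈ E` are distinct and `m₁•γ₁ + ⋯ + m_k•γ_k = 0` for integers `m_i`, then
`m_i•γ_i = 0` for every `i`. -/
def IsIndependentAdd {Γ : Type*} [AddCommGroup Γ] (E : Set Γ) : Prop :=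
  ∀ s : Finset Γ, ↑s ⊆ E → ∀ m : Γ → ℤ,
    (∑ γ ∈ s, m γ • γ) = 0 → ∀ γ ∈ s, m γ • γ = 0

/-- Every uncountable subset of `⊕_{β ∈ B} ℚ` contains an independent subset of the same
cardinality. -/
theorem uncountable_contains_independent {B : Type*} (E : Set (⨁ _ : B, ℚ))
    (hE : ¬ E.Countable) :
    ∃ F ⊆ E, IsIndependentAdd F ∧ Cardinal.mk ↥F = Cardinal.mk ↥E := by
  classical
  obtain ⟨s, hsE, hspan, hli⟩ := exists_linearIndependent ℚ E
  refine ⟨s, hsE, ?_, ?_⟩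
  · -- independence from ℚ-linear independence
    intro t hts m hsum γ hγ
    have hts' : ∀ x ∈ t, (x : ⨁ _ : B, ℚ) ∈ s := fun x hx => hts hx
    have hf : Function.Injective (fun x : {x // x ∈ t} => (⟨x.1, hts' x.1 x.2⟩ : s)) := by
      intro a b h
      exact Subtype.ext (by simpa using congrArg Subtype.val h)
    set t' : Finset s := t.attach.map ⟨_, hf⟩ with ht'
    have hsum' : ∑ i ∈ t', ((m (i : ⨁ _ : B, ℚ) : ℚ)) • (i : ⨁ _ : B, ℚ) = 0 := by
      rw [ht', Finset.sum_map]
      simp only [Function.Embedding.coeFn_mk]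
      rw [Finset.sum_attach t (fun x => ((m x : ℚ)) • x)]
      have : ∑ x ∈ t, ((m x : ℚ)) • x = ∑ x ∈ t, m x • x := by
        refine Finset.sum_congr rfl fun x _ => ?_
        exact Int.cast_smul_eq_zsmul ℚ (m x) x
      rw [this, hsum]
    have key := linearIndependent_iff'.mp hli t' (fun i => (m (i : ⨁ _ : B, ℚ) : ℚ)) hsum'
    have hmem : (⟨γ, hts' γ hγ⟩ : s) ∈ t' := by
      rw [ht', Finset.mem_map]
      exact ⟨⟨γ, hγ⟩, Finset.mem_attach _ _, rfl⟩
    have : ((m γ : ℚ)) = 0 := key _ hmem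
    have hm : m γ = 0 := by exact_mod_cast this
    rw [hm, zero_smul]
  · -- cardinality
    have hEs : E ⊆ (Submodule.span ℚ s : Set (⨁ _ : B, ℚ)) := by
      rw [hspan]; exact Submodule.subset_span
    have hb : Cardinal.mk ↥(Submodule.span ℚ s) = Cardinal.mk (s →₀ ℚ) := by
      have b := Module.Basis.span hli
      rw [Subtype.range_coe] at b
      exact b.repr.toEquiv.cardinal_eq
    have hne : Cardinal.aleph0 < Cardinal.mk ↥E := by
      rw [lt_iff_not_ge, Cardinal.mk_le_aleph0_iff]
      exact fun h => hE (Set.countable_coe_iff.mp h)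
    have hsne : Nonempty ↥s := by
      rcases s.eq_empty_or_nonempty with h | h
      · exfalso
        apply hE
        have : E ⊆ {0} := by
          intro x hx
          have := hEs hx
          rw [h, Submodule.span_empty] at this
          simpa using this
        exact (Set.countable_singleton 0).mono this
      · exact h.coe_sort
    have hfin : Cardinal.mk (s →₀ ℚ) = max (Cardinal.mk ↥s) Cardinal.aleph0 := by
      rw [Cardinal.mk_finsupp_lift_of_infinite' ↥s ℚ]
      simp [Cardinal.mk_denumerable]
    have h1 : Cardinal.mk ↥E ≤ max (Cardinal.mk ↥s) Cardinal.aleph0 := by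
      calc Cardinal.mk ↥E ≤ Cardinal.mk ↥(Submodule.span ℚ s : Set (⨁ _ : B, ℚ)) :=
            Cardinal.mk_le_mk_of_subset hEs
        _ = max (Cardinal.mk ↥s) Cardinal.aleph0 := by rw [← hfin]; exact hb
    have h2 : Cardinal.mk ↥s ≤ Cardinal.mk ↥E := Cardinal.mk_le_mk_of_subset hsE
    have h3 : Cardinal.mk ↥E ≤ Cardinal.mk ↥s := by
      rcases max_cases (Cardinal.mk ↥s) Cardinal.aleph0 with ⟨he, _⟩ | ⟨he, _⟩
      · rwa [he] at h1
      · exact absurd (h1.trans_eq he) hne.not_ge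
    exact le_antisymm h2 h3
end
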